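/- Let (r,s,t) ∈ ℝ³ satisfy 0 < r < s < t, t < r + s and r + s + t = 1, and set α := −(−r+s+t)(r−s+t)(r+s−t) (so that α = det G(r,s,t) and √(−α) > 0). Then the partial derivatives of f at (r,s,t) exist and equal: ∂f/∂r = (2/√(−α))·(−r·log r + cosθ₃·s·log s + cosθ₂·t·log t), ∂f/∂s = (2/√(−α))·(cosθ₃·r·log r − s·log s + cosθ₁·t·log t), ∂f/∂t = (2/√(−α))·(cosθ₂·r·log r + cosθ₁·s·log s − t·log t), where cosθ₁ = (−r²+s²+t²)/(2st), cosθ₂ = (r²−s²+t²)/(2rt), cosθ₃ = (r²+s²−t²)/(2rs). -/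

import Mathlib

/-- The Lobachevsky function `Л(θ) := −∫₀^θ log|2 sin t| dt`. -/
noncomputable def lob (θ : ℝ) : ℝ :=
  -∫ t in (0 : ℝ)..θ, Real.log |2 * Real.sin t|

/-- Milnor's volume function `f(r,s,t) = Л(θ₁) + Л(θ₂) + Л(θ₃)`. -/
noncomputable def f (r s t : ℝ) : ℝ :=
  lob (Real.arccos ((-r ^ 2 + s ^ 2 + t ^ 2) / (2 * s * t))) +
  lob (Real.arccos ((r ^ 2 - s ^ 2 + t ^ 2) / (2 * r * t))) +
  lob (Real.arccos ((r ^ 2 + s ^ 2 - t ^ 2) / (2 * r * s)))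

section Aux
open Real MeasureTheory intervalIntegral Set

lemma logsin_int_core {y : ℝ} (hy : 0 < y) (hy2 : y ≤ π / 2) :
    IntegrableOn (fun t => Real.log (Real.sin t)) (Ioc 0 y) := by
  have hbound : IntegrableOn (fun t : ℝ => Real.log (π/2) - Real.log t) (Ioc 0 y) := by
    apply integrableOn_deriv_of_nonneg
      (g := fun t : ℝ => t * Real.log (π/2) - (t * Real.log t - t))
    · exact ((continuous_id.mul continuous_const).sub
        (Real.continuous_mul_log.sub continuous_id)).continuousOn
    · intro x hx
      have h1 : HasDerivAt (fun t : ℝ => t * Real.log (π/2)) (Real.log (π/2)) x := by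
        simpa using (hasDerivAt_id x).mul_const (Real.log (π/2))
      have h2 := Real.hasDerivAt_mul_log hx.1.ne'
      have := h1.sub (h2.sub (hasDerivAt_id x))
      refine this.congr_deriv ?_; ring
    · intro x hx
      have : Real.log x ≤ Real.log (π/2) :=
        Real.log_le_log hx.1 (le_trans hx.2.le hy2)
      linarith
  apply Integrable.mono' hbound
  · exact ((Real.measurable_log.comp Real.measurable_sin).aestronglyMeasurable).restrict
  · rw [ae_restrict_iff' measurableSet_Ioc]
    refine Filter.Eventually.of_forall (fun x hx => ?_)
    have hx0 : 0 < x := hx.1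
    have hxpi2 : x ≤ π / 2 := hx.2.trans hy2
    have hsin : 0 < Real.sin x := Real.sin_pos_of_pos_of_lt_pi hx0
      (lt_of_le_of_lt hxpi2 (by linarith [Real.pi_pos]))
    have hsinle : Real.sin x ≤ 1 := Real.sin_le_one x
    have hlow : 2 / π * x ≤ Real.sin x := Real.mul_le_sin hx0.le hxpi2
    have h2pi : (0:ℝ) < 2 / π := by positivity
    have hlog : Real.log (2 / π * x) ≤ Real.log (Real.sin x) :=
      Real.log_le_log (by positivity) hlow
    rw [Real.log_mul (by positivity) hx0.ne', Real.log_div two_ne_zero Real.pi_ne_zero] at hlog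
    have hpi2 : Real.log (π / 2) = Real.log π - Real.log 2 :=
      Real.log_div Real.pi_ne_zero two_ne_zero
    have hns : Real.log (Real.sin x) ≤ 0 := Real.log_nonpos hsin.le hsinle
    rw [Real.norm_eq_abs, abs_of_nonpos hns]
    linarith

lemma logsin_int {x : ℝ} (hx : 0 < x) (hxpi : x < π) :
    IntegrableOn (fun t => Real.log (Real.sin t)) (Ioc 0 x) := by
  rcases le_or_gt x (π/2) with h | h
  · exact logsin_int_core hx h
  · have h1 := logsin_int_core Real.pi_div_two_pos le_rfl
    have hco : ContinuousOn (fun t => Real.log (Real.sin t)) (Icc (π/2) x) := by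
      apply ContinuousOn.log (Real.continuous_sin.continuousOn)
      intro z hz
      exact (Real.sin_pos_of_pos_of_lt_pi (lt_of_lt_of_le Real.pi_div_two_pos hz.1)
        (lt_of_le_of_lt hz.2 hxpi)).ne'
    have h2 : IntegrableOn (fun t => Real.log (Real.sin t)) (Ioc (π/2) x) :=
      hco.integrableOn_Icc.mono_set Ioc_subset_Icc_self
    apply (h1.union h2).mono_set
    intro z hz
    rcases le_or_gt z (π/2) with hc | hc
    · exact Or.inl ⟨hz.1, hc⟩
    · exact Or.inr ⟨hc, hz.2⟩

lemma lob_integrable {x : ℝ} (hx : 0 < x) (hxpi : x < π) :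
    IntervalIntegrable (fun t => Real.log |2 * Real.sin t|) volume 0 x := by
  rw [intervalIntegrable_iff_integrableOn_Ioc_of_le hx.le]
  have : IntegrableOn (fun t => Real.log 2 + Real.log (Real.sin t)) (Ioc 0 x) :=
    (integrableOn_const (measure_Ioc_lt_top.ne)).add (logsin_int hx hxpi)
  apply IntegrableOn.congr_fun this ?_ measurableSet_Ioc
  intro z hz
  have hs : 0 < Real.sin z := Real.sin_pos_of_pos_of_lt_pi hz.1 (lt_of_le_of_lt hz.2 hxpi)
  show Real.log 2 + Real.log (Real.sin z) = Real.log |2 * Real.sin z|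
  rw [abs_of_pos (by positivity), Real.log_mul two_ne_zero hs.ne']

lemma lob_hasDerivAt {θ : ℝ} (h0 : 0 < θ) (hπ : θ < π) :
    HasDerivAt lob (-Real.log (2 * Real.sin θ)) θ := by
  have hs : 0 < Real.sin θ := Real.sin_pos_of_pos_of_lt_pi h0 hπ
  have hmeas : Measurable (fun t => Real.log |2 * Real.sin t|) :=
    Real.measurable_log.comp ((Real.measurable_sin.const_mul 2).abs)
  have hd := intervalIntegral.integral_hasDerivAt_right (lob_integrable h0 hπ)
    ⟨Set.univ, Filter.univ_mem, hmeas.aestronglyMeasurable.restrict⟩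
    (by
      show ContinuousAt (fun t => Real.log |2 * Real.sin t|) θ
      apply ContinuousAt.comp (Real.continuousAt_log (by positivity))
      exact (continuous_abs.comp (continuous_const.mul Real.continuous_sin)).continuousAt)
  have hd' := hd.neg
  rw [show -Real.log (2 * Real.sin θ) = -Real.log |2 * Real.sin θ| by
    rw [abs_of_pos (by positivity : (0:ℝ) < 2 * Real.sin θ)]]
  exact hd'

lemma arccos_mem {u : ℝ} (h1 : -1 < u) (h2 : u < 1) :
    0 < Real.arccos u ∧ Real.arccos u < π :=
  ⟨Real.arccos_pos.2 h2,
   lt_of_le_of_ne (Real.arccos_le_pi u) (fun h => by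
     have := Real.arccos_eq_pi.1 h; linarith)⟩

set_option maxHeartbeats 1000000 in
lemma master (a b d : ℝ) (ha : 0 < a) (hb : 0 < b) (hd : 0 < d)
    (h1 : a < b + d) (h2 : b < a + d) (h3 : d < a + b) :
    HasDerivAt (fun x => f x b d)
      (2 / Real.sqrt ((a+b+d)*(-a+b+d)*(a-b+d)*(a+b-d)) *
        (-(a * Real.log a) + (a^2+b^2-d^2)/(2*a*b) * b * Real.log b +
         (a^2-b^2+d^2)/(2*a*d) * d * Real.log d)) a := by
  have hp : 0 < (a+b+d)*(-a+b+d)*(a-b+d)*(a+b-d) := by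
    have f1 : 0 < a+b+d := by linarith
    have f2 : 0 < -a+b+d := by linarith
    have f3 : 0 < a-b+d := by linarith
    have f4 : 0 < a+b-d := by linarith
    positivity
  set p := (a+b+d)*(-a+b+d)*(a-b+d)*(a+b-d) with hpdef
  set S := Real.sqrt p with hSdef
  have hS : 0 < S := Real.sqrt_pos.2 hp
  have hS2 : S * S = p := Real.mul_self_sqrt hp.le
  have hLS : Real.log S = Real.log p / 2 := Real.log_sqrt hp.le
  -- bounds on the three cosines
  have hu1a : -1 < (-a ^ 2 + b ^ 2 + d ^ 2) / (2 * b * d) := by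
    rw [lt_div_iff₀ (by positivity)]; nlinarith
  have hu1b : (-a ^ 2 + b ^ 2 + d ^ 2) / (2 * b * d) < 1 := by
    rw [div_lt_one (by positivity)]; nlinarith
  have hu2a : -1 < (a ^ 2 - b ^ 2 + d ^ 2) / (2 * a * d) := by
    rw [lt_div_iff₀ (by positivity)]; nlinarith
  have hu2b : (a ^ 2 - b ^ 2 + d ^ 2) / (2 * a * d) < 1 := by
    rw [div_lt_one (by positivity)]; nlinarith
  have hu3a : -1 < (a ^ 2 + b ^ 2 - d ^ 2) / (2 * a * b) := by
    rw [lt_div_iff₀ (by positivity)]; nlinarith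
  have hu3b : (a ^ 2 + b ^ 2 - d ^ 2) / (2 * a * b) < 1 := by
    rw [div_lt_one (by positivity)]; nlinarith
  -- sqrt computations
  have hsq : ∀ u c : ℝ, 0 < c → 1 - u ^ 2 = p / c ^ 2 →
      Real.sqrt (1 - u ^ 2) = S / c := by
    intro u c hc h
    rw [h, hSdef, ← Real.sqrt_sq hc.le, ← Real.sqrt_div hp.le, Real.sqrt_sq hc.le,
      Real.sqrt_div hp.le, Real.sqrt_sq hc.le]
  have hs1 : Real.sqrt (1 - ((-a ^ 2 + b ^ 2 + d ^ 2) / (2 * b * d)) ^ 2) = S / (2*b*d) :=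
    hsq _ _ (by positivity) (by field_simp; ring)
  have hs2 : Real.sqrt (1 - ((a ^ 2 - b ^ 2 + d ^ 2) / (2 * a * d)) ^ 2) = S / (2*a*d) :=
    hsq _ _ (by positivity) (by field_simp; ring)
  have hs3 : Real.sqrt (1 - ((a ^ 2 + b ^ 2 - d ^ 2) / (2 * a * b)) ^ 2) = S / (2*a*b) :=
    hsq _ _ (by positivity) (by field_simp; ring)
  -- log computations
  have hlog : ∀ x y : ℝ, 0 < x → 0 < y →
      Real.log (2 * (S / (2 * x * y))) = Real.log p / 2 - Real.log x - Real.log y := by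
    intro x y hx hy
    have : 2 * (S / (2 * x * y)) = S / (x * y) := by field_simp
    rw [this, Real.log_div hS.ne' (by positivity), Real.log_mul hx.ne' hy.ne', hLS]
    ring
  -- derivative of each term
  have T1 : HasDerivAt (fun x : ℝ => lob (Real.arccos ((-x ^ 2 + b ^ 2 + d ^ 2) / (2 * b * d))))
      (-(2*a/S) * (Real.log p / 2 - Real.log b - Real.log d)) a := by
    have hg : HasDerivAt (fun x : ℝ => (-x ^ 2 + b ^ 2 + d ^ 2) / (2 * b * d))
        ((-(2 * a ^ 1) + 0 + 0) / (2 * b * d)) a := by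
      exact (((hasDerivAt_pow 2 a).neg.add (hasDerivAt_const a (b^2))).add
        (hasDerivAt_const a (d^2))).div_const _ |>.congr_deriv (by push_cast; ring)
    have harc := (Real.hasDerivAt_arccos (ne_of_gt hu1a) (ne_of_lt hu1b)).comp a hg
    have hmem := arccos_mem hu1a hu1b
    have hlob := (lob_hasDerivAt hmem.1 hmem.2).comp a harc
    rw [Function.comp_def] at hlob
    refine hlob.congr_deriv ?_
    rw [Real.sin_arccos, hs1, hlog b d hb hd]
    field_simp
    ring
  have T2 : HasDerivAt (fun x : ℝ => lob (Real.arccos ((x ^ 2 - b ^ 2 + d ^ 2) / (2 * x * d))))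
      ((Real.log p / 2 - Real.log a - Real.log d) * (a^2+b^2-d^2) / (a*S)) a := by
    have hnum : HasDerivAt (fun x : ℝ => x ^ 2 - b ^ 2 + d ^ 2) ((2:ℕ) * a ^ 1 - 0 + 0) a :=
      ((hasDerivAt_pow 2 a).sub (hasDerivAt_const a (b^2))).add (hasDerivAt_const a (d^2))
    have hden : HasDerivAt (fun x : ℝ => 2 * x * d) (2 * 1 * d) a :=
      ((hasDerivAt_id a).const_mul 2).mul_const d
    have hg := hnum.div hden (by positivity)
    have harc := (Real.hasDerivAt_arccos (ne_of_gt hu2a) (ne_of_lt hu2b)).comp a hg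
    have hmem := arccos_mem hu2a hu2b
    have hlob := (lob_hasDerivAt hmem.1 hmem.2).comp a harc
    rw [Function.comp_def] at hlob
    refine hlob.congr_deriv ?_
    rw [Real.sin_arccos, hs2, hlog a d ha hd]
    push_cast
    field_simp
    ring
  have T3 : HasDerivAt (fun x : ℝ => lob (Real.arccos ((x ^ 2 + b ^ 2 - d ^ 2) / (2 * x * b))))
      ((Real.log p / 2 - Real.log a - Real.log b) * (a^2-b^2+d^2) / (a*S)) a := by
    have hnum : HasDerivAt (fun x : ℝ => x ^ 2 + b ^ 2 - d ^ 2) ((2:ℕ) * a ^ 1 + 0 - 0) a :=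
      ((hasDerivAt_pow 2 a).add (hasDerivAt_const a (b^2))).sub (hasDerivAt_const a (d^2))
    have hden : HasDerivAt (fun x : ℝ => 2 * x * b) (2 * 1 * b) a :=
      ((hasDerivAt_id a).const_mul 2).mul_const b
    have hg := hnum.div hden (by positivity)
    have harc := (Real.hasDerivAt_arccos (ne_of_gt hu3a) (ne_of_lt hu3b)).comp a hg
    have hmem := arccos_mem hu3a hu3b
    have hlob := (lob_hasDerivAt hmem.1 hmem.2).comp a harc
    rw [Function.comp_def] at hlob
    refine hlob.congr_deriv ?_
    rw [Real.sin_arccos, hs3, hlog a b ha hb]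
    push_cast
    field_simp
    ring
  have Hsum := (T1.add T2).add T3
  have hfun : (fun x => f x b d) = (fun x : ℝ =>
      lob (Real.arccos ((-x ^ 2 + b ^ 2 + d ^ 2) / (2 * b * d))) +
      lob (Real.arccos ((x ^ 2 - b ^ 2 + d ^ 2) / (2 * x * d))) +
      lob (Real.arccos ((x ^ 2 + b ^ 2 - d ^ 2) / (2 * x * b)))) := by
    rfl
  rw [hfun]
  refine Hsum.congr_deriv ?_
  field_simp
  ring

lemma f_swap (a b c : ℝ) : f a b c = f b a c := by
  simp only [f]
  rw [show (-b ^ 2 + a ^ 2 + c ^ 2) / (2 * a * c) = (a ^ 2 - b ^ 2 + c ^ 2) / (2 * a * c) by ring,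
      show (b ^ 2 - a ^ 2 + c ^ 2) / (2 * b * c) = (-a ^ 2 + b ^ 2 + c ^ 2) / (2 * b * c) by ring,
      show (b ^ 2 + a ^ 2 - c ^ 2) / (2 * b * a) = (a ^ 2 + b ^ 2 - c ^ 2) / (2 * a * b) by ring]
  ring

lemma f_rot (a b c : ℝ) : f a b c = f c b a := by
  simp only [f]
  rw [show (-c ^ 2 + b ^ 2 + a ^ 2) / (2 * b * a) = (a ^ 2 + b ^ 2 - c ^ 2) / (2 * a * b) by ring,
      show (c ^ 2 - b ^ 2 + a ^ 2) / (2 * c * a) = (a ^ 2 - b ^ 2 + c ^ 2) / (2 * a * c) by ring,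
      show (c ^ 2 + b ^ 2 - a ^ 2) / (2 * c * b) = (-a ^ 2 + b ^ 2 + c ^ 2) / (2 * b * c) by ring]
  ring

end Aux

/-- Lemma 6.5: the partial derivatives of `f` at `(r,s,t)` with
`0 < r < s < t`, `t < r + s`, `r + s + t = 1`, in terms of
`α = det G(r,s,t)`. -/
theorem partial_derivatives_of_f (r s t : ℝ)
    (hr : 0 < r) (hrs : r < s) (hst : s < t) (htri : t < r + s)
    (hsum : r + s + t = 1)
    (α : ℝ) (hα : α = -((-r + s + t) * (r - s + t) * (r + s - t))) :
    HasDerivAt (fun x => f x s t)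
      (2 / Real.sqrt (-α) * (-(r * Real.log r) +
        (r ^ 2 + s ^ 2 - t ^ 2) / (2 * r * s) * s * Real.log s +
        (r ^ 2 - s ^ 2 + t ^ 2) / (2 * r * t) * t * Real.log t)) r ∧
    HasDerivAt (fun y => f r y t)
      (2 / Real.sqrt (-α) * ((r ^ 2 + s ^ 2 - t ^ 2) / (2 * r * s) * r * Real.log r -
        s * Real.log s +
        (-r ^ 2 + s ^ 2 + t ^ 2) / (2 * s * t) * t * Real.log t)) s ∧
    HasDerivAt (fun z => f r s z)
      (2 / Real.sqrt (-α) * ((r ^ 2 - s ^ 2 + t ^ 2) / (2 * r * t) * r * Real.log r +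
        (-r ^ 2 + s ^ 2 + t ^ 2) / (2 * s * t) * s * Real.log s -
        t * Real.log t)) t := by
  have hs : 0 < s := hr.trans hrs
  have ht : 0 < t := hs.trans hst
  refine ⟨?_, ?_, ?_⟩
  · have e : Real.sqrt (-α) = Real.sqrt ((r+s+t)*(-r+s+t)*(r-s+t)*(r+s-t)) := by
      congr 1
      rw [hα, neg_neg]
      linear_combination (-(-r + s + t) * (r - s + t) * (r + s - t)) * hsum
    rw [e]
    have := master r s t hr hs ht (by linarith) (by linarith) (by linarith)
    convert this using 1
    all_goals ring
  · have e : Real.sqrt (-α) = Real.sqrt ((s+r+t)*(-s+r+t)*(s-r+t)*(s+r-t)) := by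
      congr 1
      rw [hα, neg_neg]
      linear_combination (-(-r + s + t) * (r - s + t) * (r + s - t)) * hsum
    have hfun : (fun y => f r y t) = (fun y => f y r t) := funext fun y => f_swap r y t
    rw [hfun, e]
    have := master s r t hs hr ht (by linarith) (by linarith) (by linarith)
    convert this using 1
    all_goals ring
  · have e : Real.sqrt (-α) = Real.sqrt ((t+s+r)*(-t+s+r)*(t-s+r)*(t+s-r)) := by
      congr 1
      rw [hα, neg_neg]
      linear_combination (-(-r + s + t) * (r - s + t) * (r + s - t)) * hsum
    have hfun : (fun z => f r s z) = (fun z => f z s r) := funext fun z => f_rot r s z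
    rw [hfun, e]
    have := master t s r ht hs hr (by linarith) (by linarith) (by linarith)
    convert this using 1
    all_goals ring
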